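/- Let P⁰ and P¹ be two points in the unit square [0,1]². Then there exists a corner c ∈ {0,1}² such that no point on the line segment joining P⁰ and P¹ lies in the open quarter of the square nearest to c, i.e., for every point (a,b) on the segment, it is not the case that both |a - c₁| < 1/2 and |b - c₂| < 1/2. -/

import Mathlib

/-!
Along a line the two coordinates are affine in the parameter, so each crossing of the
vertical (resp. horizontal) line through the centre happens in one fixed direction. A line
through the south-west and north-east open quadrants therefore has slopes of equal sign in
the two coordinates, while one through the north-west and south-east quadrants has slopes of
opposite sign; so no line meets all four. The open quarter of the unit square nearest to a
corner lies in the corresponding open quadrant around `(1/2, 1/2)`.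
-/

open Set AffineMap

/-- The open half-line above `a` (for `true`) or below `a` (for `false`). -/
def openHalfLine (a : ℝ) (b : Bool) : Set ℝ := cond b (Ioi a) (Iio a)

def openQuadrant (m : ℝ × ℝ) (c : Bool × Bool) : Set (ℝ × ℝ) :=
  openHalfLine m.1 c.1 ×ˢ openHalfLine m.2 c.2

lemma slope_mul_sub_pos_of_lineMap_lt_of_lt {a b m s t : ℝ}
    (hs : lineMap a b s < m) (ht : m < lineMap a b t) : 0 < (b - a) * (t - s) := by
  rw [lineMap_apply_ring'] at hs ht
  linarith [show (b - a) * (t - s) = (t * (b - a) + a) - (s * (b - a) + a) by ring]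

theorem exists_forall_lineMap_notMem_openQuadrant (p q m : ℝ × ℝ) :
    ∃ c : Bool × Bool, ∀ t : ℝ, lineMap p q t ∉ openQuadrant m c := by
  by_contra! h
  obtain ⟨t₁, hx₁, hy₁⟩ := h (false, false)
  obtain ⟨t₂, hx₂, hy₂⟩ := h (false, true)
  obtain ⟨t₃, hx₃, hy₃⟩ := h (true, false)
  obtain ⟨t₄, hx₄, hy₄⟩ := h (true, true)
  simp only [openHalfLine, cond_true, cond_false, mem_Ioi, mem_Iio, fst_lineMap,
    snd_lineMap] at hx₁ hy₁ hx₂ hy₂ hx₃ hy₃ hx₄ hy₄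
  have hx₂₃ := slope_mul_sub_pos_of_lineMap_lt_of_lt hx₂ hx₃
  have hy₃₂ := slope_mul_sub_pos_of_lineMap_lt_of_lt hy₃ hy₂
  have hx₁₄ := slope_mul_sub_pos_of_lineMap_lt_of_lt hx₁ hx₄
  have hy₁₄ := slope_mul_sub_pos_of_lineMap_lt_of_lt hy₁ hy₄
  linarith [mul_pos hx₂₃ hy₁₄, mul_pos hy₃₂ hx₁₄,
    show (q.1 - p.1) * (t₃ - t₂) * ((q.2 - p.2) * (t₄ - t₁)) +
      (q.2 - p.2) * (t₂ - t₃) * ((q.1 - p.1) * (t₄ - t₁)) = 0 by ring]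

lemma mem_openHalfLine_half_of_abs_sub_lt_half {x : ℝ} (b : Bool)
    (h : |x - (if b then 1 else 0)| < 1 / 2) : x ∈ openHalfLine (1 / 2) b := by
  obtain ⟨hlo, hhi⟩ := abs_lt.mp h
  cases b <;> simp only [Bool.false_eq_true, if_true, if_false, openHalfLine, cond_true,
    cond_false, mem_Ioi, mem_Iio] at hlo hhi ⊢ <;> linarith

theorem segment_misses_a_quarter_general
    (P0 P1 : ℝ × ℝ) :
    ∃ c : Bool × Bool, ∀ t : ℝ, 0 ≤ t → t ≤ 1 →
      ¬ (|(t * P0.1 + (1 - t) * P1.1) - (if c.1 then 1 else 0)| < 1 / 2 ∧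
         |(t * P0.2 + (1 - t) * P1.2) - (if c.2 then 1 else 0)| < 1 / 2) := by
  obtain ⟨c, hc⟩ := exists_forall_lineMap_notMem_openQuadrant P1 P0 (1 / 2, 1 / 2)
  refine ⟨c, fun t _ _ ⟨hx, hy⟩ => hc t ⟨?_, ?_⟩⟩
  · rw [fst_lineMap, lineMap_apply_ring, add_comm]
    exact mem_openHalfLine_half_of_abs_sub_lt_half c.1 hx
  · rw [snd_lineMap, lineMap_apply_ring, add_comm]
    exact mem_openHalfLine_half_of_abs_sub_lt_half c.2 hy

/-- For any two points P⁰, P¹ in the unit square, there is a corner c of the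
square such that no point of the segment joining P⁰ and P¹ lies in the open
quarter of the square nearest to c. -/
theorem segment_misses_a_quarter
    (P0 P1 : ℝ × ℝ)
    (h0 : P0.1 ∈ Set.Icc (0 : ℝ) 1 ∧ P0.2 ∈ Set.Icc (0 : ℝ) 1)
    (h1 : P1.1 ∈ Set.Icc (0 : ℝ) 1 ∧ P1.2 ∈ Set.Icc (0 : ℝ) 1) :
    ∃ c : Bool × Bool, ∀ t : ℝ, 0 ≤ t → t ≤ 1 →
      ¬ (|(t * P0.1 + (1 - t) * P1.1) - (if c.1 then 1 else 0)| < 1 / 2 ∧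
         |(t * P0.2 + (1 - t) * P1.2) - (if c.2 then 1 else 0)| < 1 / 2) :=
  segment_misses_a_quarter_general P0 P1
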